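/- arXiv:2402.03845 — 3 statements merged into one kernel-verified Lean document; each statement's English description precedes it below -/
import Mathlib

section
/- Let p : E → ℝ be differentiable and positive, let f, r : E → E be differentiable, and let c > 0 be a real constant. Then for every x ∈ E: div (fun y => p y • (f y - c • r y)) (x) = div (fun y => p y • f y) (x) holds if and only if div r(x) + ⟪r(x), ∇(Real.log ∘ p)(x)⟫ = 0. (Equations (10)–(11): replacing the true score by a perturbed vector field leaves the Fokker–Planck right-hand side unchanged exactly when the remainder r satisfies the gauge freedom condition.) -/
open scoped RealInnerProductSpace

/-- The divergence of a vector field `v` at `x`: the trace of its Fréchet derivative. -/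
noncomputable def div {D : ℕ} (v : EuclideanSpace ℝ (Fin D) → EuclideanSpace ℝ (Fin D))
    (x : EuclideanSpace ℝ (Fin D)) : ℝ :=
  LinearMap.trace ℝ (EuclideanSpace ℝ (Fin D)) (fderiv ℝ v x).toLinearMap

/-!
Write `g = div r + ⟪r, ∇ log p⟫` for the gauge defect of `r`. By linearity of the divergence
and the product rule, `div (p • (f - c • r)) = div (p • f) - c • div (p • r)`, and
`div (p • r) = p • div r + ⟪r, ∇p⟫ = p • g` because `∇ log p = p⁻¹ • ∇p`. As `c` and `p` are
nonzero, the two divergences agree exactly when `g` vanishes.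
-/

section Divergence

variable {D : ℕ} {x : EuclideanSpace ℝ (Fin D)}

lemma div_sub_const_smul {v w : EuclideanSpace ℝ (Fin D) → EuclideanSpace ℝ (Fin D)}
    (hv : DifferentiableAt ℝ v x) (hw : DifferentiableAt ℝ w x) (c : ℝ) :
    div (fun y => v y - c • w y) x = div v x - c * div w x := by
  have hd : fderiv ℝ (fun y => v y - c • w y) x = fderiv ℝ v x - c • fderiv ℝ w x :=
    (hv.hasFDerivAt.sub (hw.hasFDerivAt.const_smul c)).fderiv
  rw [div, hd]
  simp only [ContinuousLinearMap.toLinearMap_sub, ContinuousLinearMap.toLinearMap_smul, map_sub,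
    map_smul, smul_eq_mul, div]

lemma div_smul {p : EuclideanSpace ℝ (Fin D) → ℝ}
    {r : EuclideanSpace ℝ (Fin D) → EuclideanSpace ℝ (Fin D)}
    (hp : DifferentiableAt ℝ p x) (hr : DifferentiableAt ℝ r x) :
    div (fun y => p y • r y) x = p x * div r x + fderiv ℝ p x (r x) := by
  have hd : fderiv ℝ (fun y => p y • r y) x
      = p x • fderiv ℝ r x + (fderiv ℝ p x).smulRight (r x) :=
    (hp.hasFDerivAt.smul hr.hasFDerivAt).fderiv
  rw [div, hd]
  simp only [ContinuousLinearMap.toLinearMap_add, ContinuousLinearMap.toLinearMap_smul, map_add,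
    map_smul, smul_eq_mul, div]
  exact congrArg _ (LinearMap.trace_smulRight (fderiv ℝ p x).toLinearMap (r x))

lemma div_smul_eq_mul_add_inner_gradient_log {p : EuclideanSpace ℝ (Fin D) → ℝ}
    {r : EuclideanSpace ℝ (Fin D) → EuclideanSpace ℝ (Fin D)}
    (hp : DifferentiableAt ℝ p x) (hpx : p x ≠ 0) (hr : DifferentiableAt ℝ r x) :
    div (fun y => p y • r y) x = p x * (div r x + ⟪r x, gradient (Real.log ∘ p) x⟫) := by
  have hlog : fderiv ℝ (Real.log ∘ p) x = (p x)⁻¹ • fderiv ℝ p x :=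
    (hp.hasFDerivAt.log hpx).fderiv
  rw [div_smul hp hr, inner_gradient_right, hlog]
  simp only [FunLike.coe_smul, Pi.smul_apply, smul_eq_mul, conj_trivial]
  field_simp

end Divergence

theorem stmt1_general (D : ℕ)
    (p : EuclideanSpace ℝ (Fin D) → ℝ) (hp : Differentiable ℝ p)
    (hppos : ∀ x, 0 < p x)
    (f r : EuclideanSpace ℝ (Fin D) → EuclideanSpace ℝ (Fin D))
    (hf : Differentiable ℝ f) (hr : Differentiable ℝ r)
    (c : ℝ) (hc : 0 < c)
    (x : EuclideanSpace ℝ (Fin D)) :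
    div (fun y => p y • (f y - c • r y)) x = div (fun y => p y • f y) x
      ↔ div r x + ⟪r x, gradient (Real.log ∘ p) x⟫ = 0 := by
  have hsplit : (fun y => p y • (f y - c • r y)) = fun y => p y • f y - c • (p y • r y) := by
    funext y
    rw [smul_sub, smul_comm]
  rw [hsplit, div_sub_const_smul (v := fun y => p y • f y) (w := fun y => p y • r y)
      ((hp x).smul (hf x)) ((hp x).smul (hr x)),
    div_smul_eq_mul_add_inner_gradient_log (hp x) (hppos x).ne' (hr x)]
  simp [hc.ne', (hppos x).ne']

/-- Replacing `f` by `f - c • r` leaves the Fokker–Planck right-hand side unchanged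
at `x` exactly when `r` satisfies the gauge freedom condition at `x`. -/
theorem stmt1 (D : ℕ) (hD : 1 ≤ D)
    (p : EuclideanSpace ℝ (Fin D) → ℝ) (hp : Differentiable ℝ p)
    (hppos : ∀ x, 0 < p x)
    (f r : EuclideanSpace ℝ (Fin D) → EuclideanSpace ℝ (Fin D))
    (hf : Differentiable ℝ f) (hr : Differentiable ℝ r)
    (c : ℝ) (hc : 0 < c)
    (x : EuclideanSpace ℝ (Fin D)) :
    div (fun y => p y • (f y - c • r y)) x = div (fun y => p y • f y) x
      ↔ div r x + ⟪r x, gradient (Real.log ∘ p) x⟫ = 0 :=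
  stmt1_general D p hp hppos f r hf hr c hc x
end

section
/- Let p : E → ℝ be C¹ and positive, and let r : E → E be C¹ satisfying the gauge freedom condition: div r(x) + ⟪r(x), ∇(Real.log ∘ p)(x)⟫ = 0 for all x ∈ E. Then for every smooth compactly supported φ : E → ℝ, ∫ ⟪∇φ(x), r(x)⟫ · p(x) dx = 0; that is, r is orthogonal in the p-weighted L² inner product to every conservative vector field with smooth compactly supported potential. -/
open scoped RealInnerProductSpace
open MeasureTheory Set

lemma trace_eq_sum' (D : ℕ) (T : EuclideanSpace ℝ (Fin D) →L[ℝ] EuclideanSpace ℝ (Fin D)) :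
    LinearMap.trace ℝ (EuclideanSpace ℝ (Fin D)) T.toLinearMap
      = ∑ i : Fin D, T (EuclideanSpace.single i (1:ℝ)) i := by
  rw [LinearMap.trace_eq_matrix_trace ℝ (EuclideanSpace.basisFun (Fin D) ℝ).toBasis]
  rw [Matrix.trace]
  simp [Matrix.diag, LinearMap.toMatrix_apply, EuclideanSpace.basisFun_apply,
    EuclideanSpace.basisFun_repr]

lemma trace_smulRight' (D : ℕ) (c : EuclideanSpace ℝ (Fin D) →L[ℝ] ℝ)
    (v : EuclideanSpace ℝ (Fin D)) :
    LinearMap.trace ℝ (EuclideanSpace ℝ (Fin D)) (c.smulRight v).toLinearMap = c v := by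
  rw [trace_eq_sum']
  have hv : v = ∑ i : Fin D, v i • EuclideanSpace.single i (1:ℝ) := by
    have := (EuclideanSpace.basisFun (Fin D) ℝ).toBasis.sum_repr v
    simpa [EuclideanSpace.basisFun_apply, EuclideanSpace.basisFun_repr] using this.symm
  conv_rhs => rw [hv]
  rw [map_sum]
  refine Finset.sum_congr rfl fun i _ => ?_
  simp [mul_comm]

lemma div_pi' (n : ℕ) (F : (Fin (n+1) → ℝ) → (Fin (n+1) → ℝ)) (hF : ContDiff ℝ 1 F)
    (hsupp : HasCompactSupport F) :
    ∫ x, ∑ i, fderiv ℝ F x (Pi.single i 1) i = 0 := by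
  obtain ⟨R, hR0, hR⟩ := hsupp.isBounded.subset_closedBall_lt 0 0
  set a : Fin (n+1) → ℝ := fun _ => -(R+1) with ha
  set b : Fin (n+1) → ℝ := fun _ => (R+1) with hb
  have hai : ∀ i, a i = -(R+1) := fun _ => rfl
  have hbi : ∀ i, b i = R+1 := fun _ => rfl
  have hle : a ≤ b := fun i => by rw [hai i, hbi i]; linarith
  have hball : ∀ x ∈ tsupport F, ∀ i, |x i| ≤ R := by
    intro x hx i
    have := hR hx
    rw [Metric.mem_closedBall, dist_zero_right, pi_norm_le_iff_of_nonneg hR0.le] at this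
    simpa [Real.norm_eq_abs] using this i
  have hcont : Continuous fun x => ∑ i, fderiv ℝ F x (Pi.single i 1) i :=
    continuous_finset_sum _ fun i _ =>
      (continuous_apply i).comp ((hF.continuous_fderiv one_ne_zero).clm_apply continuous_const)
  have key := integral_divergence_of_hasFDerivAt_off_countable a b hle F (fderiv ℝ F)
    ∅ countable_empty (hF.continuous.continuousOn)
    (fun x _ => (hF.differentiable one_ne_zero x).hasFDerivAt)
    (hcont.continuousOn.integrableOn_compact isCompact_Icc)
  have hfaces : ∀ (i : Fin (n+1)) (c : ℝ), R < |c| → ∀ (y : Fin n → ℝ),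
      F (Fin.insertNth i c y) = 0 := by
    intro i c hc y
    apply image_eq_zero_of_notMem_tsupport
    intro hmem
    have h1 := hball _ hmem i
    rw [Fin.insertNth_apply_same] at h1
    linarith [le_abs_self c, neg_abs_le c, abs_le.mp h1]
  have hzero : (∑ i : Fin (n+1),
      ((∫ x in Icc (a ∘ i.succAbove) (b ∘ i.succAbove), F (Fin.insertNth i (b i) x) i) -
        ∫ x in Icc (a ∘ i.succAbove) (b ∘ i.succAbove), F (Fin.insertNth i (a i) x) i)) = 0 := by
    refine Finset.sum_eq_zero fun i _ => ?_
    have e1 : R < |b i| := by rw [hbi i, abs_of_pos] <;> linarith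
    have e2 : R < |a i| := by rw [hai i, abs_of_neg] <;> linarith
    simp [hfaces i (b i) e1, hfaces i (a i) e2]
  rw [hzero] at key
  rw [← key]
  apply (setIntegral_eq_integral_of_forall_compl_eq_zero _).symm
  intro x hx
  have hx' : x ∉ tsupport F := by
    intro h
    refine hx ⟨fun i => ?_, fun i => ?_⟩ <;> have := abs_le.mp (hball x h i)
    · rw [hai i]; linarith [this.1]
    · rw [hbi i]; linarith [this.2]
  have hz : fderiv ℝ F x = 0 := by
    by_contra h
    exact hx' (support_fderiv_subset ℝ (Function.mem_support.mpr h))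
  simp [hz]

lemma integral_div_eq_zero' (D : ℕ) (hD : 1 ≤ D)
    (G : EuclideanSpace ℝ (Fin D) → EuclideanSpace ℝ (Fin D)) (hG : ContDiff ℝ 1 G)
    (hs : HasCompactSupport G) :
    ∫ x, LinearMap.trace ℝ (EuclideanSpace ℝ (Fin D)) (fderiv ℝ G x).toLinearMap = 0 := by
  obtain ⟨n, rfl⟩ : ∃ n, D = n + 1 := ⟨D - 1, (Nat.succ_pred_eq_of_pos hD).symm⟩
  set eL := EuclideanSpace.equiv (Fin (n+1)) ℝ with heL
  set F : (Fin (n+1) → ℝ) → (Fin (n+1) → ℝ) := fun y => eL (G (eL.symm y)) with hF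
  have hFc : ContDiff ℝ 1 F := eL.contDiff.comp (hG.comp eL.symm.contDiff)
  have hFs : HasCompactSupport F :=
    (hs.comp_homeomorph eL.symm.toHomeomorph).comp_left (map_zero eL)
  have hder : ∀ y, fderiv ℝ F y =
      (eL.toContinuousLinearMap.comp (fderiv ℝ G (eL.symm y))).comp
        eL.symm.toContinuousLinearMap := by
    intro y
    exact (eL.toContinuousLinearMap.hasFDerivAt.comp y
      (((hG.differentiable one_ne_zero (eL.symm y)).hasFDerivAt).comp y
        eL.symm.toContinuousLinearMap.hasFDerivAt)).fderiv
  have hpt : ∀ y, (∑ i, fderiv ℝ F y (Pi.single i 1) i)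
      = LinearMap.trace ℝ (EuclideanSpace ℝ (Fin (n+1)))
          (fderiv ℝ G (eL.symm y)).toLinearMap := by
    intro y
    rw [trace_eq_sum', hder y]
    refine Finset.sum_congr rfl fun i _ => ?_
    simp only [ContinuousLinearMap.coe_comp', Function.comp_apply,
      ContinuousLinearEquiv.coe_coe]
    congr 1
  have mp := (EuclideanSpace.volume_preserving_symm_measurableEquiv_toLp (ι := Fin (n+1))).symm
  have hdiv := div_pi' n F hFc hFs
  rw [← hdiv]
  rw [← mp.integral_comp (MeasurableEquiv.toLp 2 (Fin (n+1) → ℝ)).measurableEmbedding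
    (fun x => LinearMap.trace ℝ (EuclideanSpace ℝ (Fin (n+1))) (fderiv ℝ G x).toLinearMap)]
  congr 1
  ext y
  rw [hpt y]
  congr 1

/-- A field satisfying the gauge freedom condition is orthogonal in the p-weighted
L² inner product to every gradient of a smooth compactly supported potential. -/
theorem stmt3 (D : ℕ) (hD : 1 ≤ D)
    (p : EuclideanSpace ℝ (Fin D) → ℝ) (hp : ContDiff ℝ 1 p)
    (hppos : ∀ x, 0 < p x)
    (r : EuclideanSpace ℝ (Fin D) → EuclideanSpace ℝ (Fin D)) (hr : ContDiff ℝ 1 r)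
    (hgauge : ∀ x, div r x + ⟪r x, gradient (Real.log ∘ p) x⟫ = 0) :
    ∀ φ : EuclideanSpace ℝ (Fin D) → ℝ, ContDiff ℝ (⊤ : ℕ∞) φ → HasCompactSupport φ →
      ∫ x, ⟪gradient φ x, r x⟫ * p x = 0 := by
  intro φ hφ hφs
  have hφ1 : ContDiff ℝ 1 φ := hφ.of_le (by simp)
  have hGc : ContDiff ℝ 1 (fun x => φ x • (p x • r x)) := hφ1.smul (hp.smul hr)
  have hGs : HasCompactSupport (fun x => φ x • (p x • r x)) := hφs.smul_right
  have key : ∀ x, LinearMap.trace ℝ (EuclideanSpace ℝ (Fin D))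
        (fderiv ℝ (fun x => φ x • (p x • r x)) x).toLinearMap
      = ⟪gradient φ x, r x⟫ * p x := by
    intro x
    have hpd := (hp.differentiable one_ne_zero x).hasFDerivAt
    have hrd := (hr.differentiable one_ne_zero x).hasFDerivAt
    have hφd := (hφ1.differentiable one_ne_zero x).hasFDerivAt
    have hw : HasFDerivAt (fun y => p y • r y)
        (p x • fderiv ℝ r x + (fderiv ℝ p x).smulRight (r x)) x := hpd.smul hrd
    have hGd : HasFDerivAt (fun x => φ x • (p x • r x))
        (φ x • (p x • fderiv ℝ r x + (fderiv ℝ p x).smulRight (r x))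
          + (fderiv ℝ φ x).smulRight (p x • r x)) x := hφd.smul hw
    -- log ∘ p derivative
    have hlp : HasFDerivAt (Real.log ∘ p) ((p x)⁻¹ • fderiv ℝ p x) x :=
      (Real.hasDerivAt_log (hppos x).ne').comp_hasFDerivAt x hpd
    have hgradlp : ⟪r x, gradient (Real.log ∘ p) x⟫ = (p x)⁻¹ * fderiv ℝ p x (r x) := by
      rw [gradient, hlp.fderiv, real_inner_comm, InnerProductSpace.toDual_symm_apply]
      simp
    have hgauge' : p x * div r x + fderiv ℝ p x (r x) = 0 := by
      have h0 := hgauge x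
      rw [hgradlp] at h0
      have hpne := (hppos x).ne'
      field_simp at h0
      linarith [mul_comm (div r x) (p x) ▸ h0]
    have hinner : ⟪gradient φ x, r x⟫ = fderiv ℝ φ x (r x) := by
      rw [gradient, InnerProductSpace.toDual_symm_apply]
    rw [hGd.fderiv]
    have h1 : ((φ x • (p x • fderiv ℝ r x + (fderiv ℝ p x).smulRight (r x))
        + (fderiv ℝ φ x).smulRight (p x • r x)) : EuclideanSpace ℝ (Fin D) →L[ℝ] EuclideanSpace ℝ (Fin D)).toLinearMap
        = φ x • ((p x • (fderiv ℝ r x).toLinearMap)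
            + ((fderiv ℝ p x).smulRight (r x)).toLinearMap)
          + ((fderiv ℝ φ x).smulRight (p x • r x)).toLinearMap := by
      rfl
    rw [h1, map_add, _root_.map_smul, map_add, _root_.map_smul,
      trace_smulRight', trace_smulRight']
    have hdivr : LinearMap.trace ℝ (EuclideanSpace ℝ (Fin D)) (fderiv ℝ r x).toLinearMap
        = div r x := rfl
    rw [hdivr, ContinuousLinearMap.map_smul, hinner]
    simp only [smul_eq_mul]
    rw [hgauge']
    ring
  have heq : (fun x => ⟪gradient φ x, r x⟫ * p x)
      = fun x => LinearMap.trace ℝ (EuclideanSpace ℝ (Fin D))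
          (fderiv ℝ (fun x => φ x • (p x • r x)) x).toLinearMap := by
    ext x; rw [key x]
  rw [heq]
  exact integral_div_eq_zero' D hD _ hGc hGs
end

section
/- Let P : ℝ → Matrix (Fin D) (Fin D) ℝ be differentiable with P(t) symmetric for every t, let pvec : ℝ → (Fin D → ℝ) be differentiable with ‖pvec(t)‖ = 1 (Euclidean norm) for every t, and let λ : ℝ → ℝ satisfy P(t) *ᵥ pvec(t) = λ(t) • pvec(t) for every t. Then λ is differentiable and λ'(t) = ⟪pvec(t), P'(t) *ᵥ pvec(t)⟫ for every t, where P'(t) denotes the derivative of P at t. (Equation (22) in the proof of Lemma 1: the derivative of an eigenvalue along a differentiable unit eigenvector curve of a symmetric matrix family.) -/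
open Matrix

attribute [local instance] Matrix.normedAddCommGroup Matrix.normedSpace

/-!
Hellmann–Feynman: on the unit sphere the eigenvalue is the quadratic form `λ = ⟪p, P p⟫`, whose
derivative is `⟪p', P p⟫ + ⟪p, P' p⟫ + ⟪p, P p'⟫`. Since `P` is symmetric, the two outer terms
both equal `λ ⟪p, p'⟫`, which vanishes because `⟪p, p⟫ = 1` is constant.
-/

section Calculus

variable {𝕜 : Type*} [NontriviallyNormedField 𝕜] {m n : Type*} [Fintype n] {x : 𝕜}

theorem HasDerivAt.dotProduct {u v : 𝕜 → n → 𝕜} {u' v' : n → 𝕜}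
    (hu : HasDerivAt u u' x) (hv : HasDerivAt v v' x) :
    HasDerivAt (fun s => u s ⬝ᵥ v s) (u' ⬝ᵥ v x + u x ⬝ᵥ v') x := by
  simpa only [_root_.dotProduct, Finset.sum_add_distrib] using
    HasDerivAt.fun_sum (A := fun i s => u s i * v s i) (u := .univ) fun i _ =>
      (hasDerivAt_pi.1 hu i).mul (hasDerivAt_pi.1 hv i)

theorem HasDerivAt.mulVec {A : 𝕜 → Matrix m n 𝕜} {A' : Matrix m n 𝕜} {v : 𝕜 → n → 𝕜}
    {v' : n → 𝕜} (hA : HasDerivAt A A' x) (hv : HasDerivAt v v' x) :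
    HasDerivAt (fun s => A s *ᵥ v s) (A' *ᵥ v x + A x *ᵥ v') x :=
  hasDerivAt_pi.2 fun i => (hasDerivAt_pi.1 hA i).dotProduct hv

end Calculus

section Eigenvalue

variable {n : Type*} [Fintype n] {x : ℝ}

theorem dotProduct_eq_zero_of_hasDerivAt_of_dotProduct_self_eq_one {u : ℝ → n → ℝ}
    {u' : n → ℝ} (hu : HasDerivAt u u' x) (hunit : ∀ᶠ s in nhds x, u s ⬝ᵥ u s = 1) :
    u x ⬝ᵥ u' = 0 := by
  have hconst : HasDerivAt (fun s => u s ⬝ᵥ u s) 0 x :=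
    (hasDerivAt_const x (1 : ℝ)).congr_of_eventuallyEq hunit
  have h := (hu.dotProduct hu).unique hconst
  rw [dotProduct_comm u'] at h
  linarith

theorem hasDerivAt_eigenvalue_of_isSymm {P : ℝ → Matrix n n ℝ} {P' : Matrix n n ℝ}
    {p : ℝ → n → ℝ} {p' : n → ℝ} {lam : ℝ → ℝ} (hP : HasDerivAt P P' x)
    (hp : HasDerivAt p p' x) (hsymm : (P x).IsSymm)
    (hunit : ∀ᶠ s in nhds x, p s ⬝ᵥ p s = 1)
    (heig : ∀ᶠ s in nhds x, P s *ᵥ p s = lam s • p s) :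
    HasDerivAt lam (p x ⬝ᵥ (P' *ᵥ p x)) x := by
  have horth := dotProduct_eq_zero_of_hasDerivAt_of_dotProduct_self_eq_one hp hunit
  have hlam : (fun s => p s ⬝ᵥ (P s *ᵥ p s)) =ᶠ[nhds x] lam := by
    filter_upwards [hunit, heig] with s hs hPs
    rw [hPs, dotProduct_smul, hs, smul_eq_mul, mul_one]
  have hleft : p' ⬝ᵥ (P x *ᵥ p x) = 0 := by
    rw [heig.self_of_nhds, dotProduct_smul, dotProduct_comm, horth, smul_zero]
  have hright : p x ⬝ᵥ (P x *ᵥ p') = 0 := by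
    rw [dotProduct_mulVec, ← mulVec_transpose, hsymm.eq, heig.self_of_nhds, smul_dotProduct,
      horth, smul_zero]
  have hquad := hp.dotProduct (hP.mulVec hp)
  rw [dotProduct_add, hleft, hright, zero_add, add_zero] at hquad
  exact hquad.congr_of_eventuallyEq hlam.symm

end Eigenvalue

theorem dotProduct_self_eq_one_of_norm_eq_one {n : Type*} [Fintype n] {v : n → ℝ}
    (h : ‖(WithLp.equiv 2 (n → ℝ)).symm v‖ = 1) : v ⬝ᵥ v = 1 := by
  have := real_inner_self_eq_norm_sq ((WithLp.equiv 2 (n → ℝ)).symm v)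
  rwa [h, one_pow, WithLp.equiv_symm_apply, EuclideanSpace.inner_toLp_toLp, star_trivial] at this

theorem stmt12_general (D : ℕ)
    (P P' : ℝ → Matrix (Fin D) (Fin D) ℝ)
    (hP : ∀ t, HasDerivAt P (P' t) t)
    (hsymm : ∀ t, (P t).IsSymm)
    (pvec : ℝ → (Fin D → ℝ))
    (hpvec : Differentiable ℝ pvec)
    (hunit : ∀ t, ‖(WithLp.equiv 2 (Fin D → ℝ)).symm (pvec t)‖ = 1)
    (lam : ℝ → ℝ)
    (heig : ∀ t, P t *ᵥ pvec t = lam t • pvec t) :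
    ∀ t, HasDerivAt lam (pvec t ⬝ᵥ (P' t *ᵥ pvec t)) t := fun t =>
  hasDerivAt_eigenvalue_of_isSymm (hP t) (hpvec t).hasDerivAt (hsymm t)
    (.of_forall fun s => dotProduct_self_eq_one_of_norm_eq_one (hunit s)) (.of_forall heig)

/-- Equation (22): the derivative of an eigenvalue along a differentiable unit
eigenvector curve of a differentiable symmetric matrix family:
λ'(t) = ⟪p(t), P'(t) p(t)⟫. -/
theorem stmt12 (D : ℕ) (hD : 1 ≤ D)
    (P P' : ℝ → Matrix (Fin D) (Fin D) ℝ)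
    (hP : ∀ t, HasDerivAt P (P' t) t)
    (hsymm : ∀ t, (P t).IsSymm)
    (pvec : ℝ → (Fin D → ℝ))
    (hpvec : Differentiable ℝ pvec)
    (hunit : ∀ t, ‖(WithLp.equiv 2 (Fin D → ℝ)).symm (pvec t)‖ = 1)
    (lam : ℝ → ℝ)
    (heig : ∀ t, P t *ᵥ pvec t = lam t • pvec t) :
    ∀ t, HasDerivAt lam (pvec t ⬝ᵥ (P' t *ᵥ pvec t)) t :=
  stmt12_general D P P' hP hsymm pvec hpvec hunit lam heig
end
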